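/- Let σ be a primitive pseudo-unimodular substitution over a finite alphabet whose incidence matrix has Perron eigenvalue β that is not a Pisot number, and suppose (as given by Theorem on eigenvalues) that every eigenvalue e^{2iπα} of the subshift satisfies α = w·v_β for some integer row vector w, where v_β is the Perron eigenvector normalized to have coordinate sum 1. Then the set of such α is contained in a ℚ-vector subspace of ℚ(β) of dimension strictly less than deg(β); in particular β itself is not of the form w·v_β with the fixed-point property below. -/

import Mathlib

/-!
Since `β` is not Pisot it has a conjugate `γ ≠ β` with `|γ| ≥ 1`; let `ψ : ℚ(β) → ℂ` be the
embedding with `ψ β = γ`. The Perron eigenvector normalised to sum `1` can be taken with entries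
in `ℚ(β)`, and `ψ` maps it to an eigenvector for `γ`, again of sum `1`. If `α = w · v` for all
such eigenvectors, then `α = w · v_β ∈ ℚ(β)` and `ψ α = α`, so `α` lies in the subspace of `ℚ(β)`
on which `ψ` agrees with the real embedding; it does not contain `β`, hence is proper.
-/

open scoped Classical in
/-- A square integer matrix is pseudo-unimodular if the product of its non-zero
complex eigenvalues, counted with algebraic multiplicity, equals `±1`. -/
def PseudoUnimodular {A : Type*} [Fintype A] [DecidableEq A] (M : Matrix A A ℤ) : Prop :=
  ((M.map (fun x : ℤ => (x : ℂ))).charpoly.roots.filter (fun z => z ≠ 0)).prod = 1 ∨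
  ((M.map (fun x : ℤ => (x : ℂ))).charpoly.roots.filter (fun z => z ≠ 0)).prod = -1

/-- A real number is a Pisot number if it is an algebraic integer `> 1` all of whose
other complex conjugates have modulus `< 1`. -/
def IsPisot (β : ℝ) : Prop :=
  1 < β ∧ IsIntegral ℤ β ∧
    ∀ γ : ℂ, Polynomial.aeval γ (minpoly ℚ β) = 0 → γ ≠ (β : ℂ) → ‖γ‖ < 1

open IntermediateField Matrix Polynomial

namespace Matrix

theorem map_intCast_map {m n R S : Type*} [Ring R] [Ring S] (f : R →+* S) (M : Matrix m n ℤ) :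
    (M.map (Int.cast : ℤ → R)).map f = M.map Int.cast := by
  ext; simp

variable {n : Type*} [Fintype n]

theorem isIntegral_of_map_mulVec_eq_smul [DecidableEq n] {R S : Type*} [CommRing R] [CommRing S]
    [IsDomain S] [Algebra R S] (M : Matrix n n R) {v : n → S} (hv : v ≠ 0) {μ : S}
    (h : M.map (algebraMap R S) *ᵥ v = μ • v) : IsIntegral R μ := by
  have hroot : (M.map (algebraMap R S)).charpoly.IsRoot μ := by
    rw [IsRoot, eval_charpoly, ← exists_mulVec_eq_zero_iff]
    exact ⟨v, hv, by ext i; simp [sub_mulVec, h]⟩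
  refine ⟨M.charpoly, M.charpoly_monic, ?_⟩
  rwa [← eval_map, ← charpoly_map]

theorem exists_mulVec_eq_smul_of_map {K L : Type*} [Field K] [Field L] [Algebra K L]
    (M : Matrix n n K) {μ : K} {v : n → L}
    (h : M.map (algebraMap K L) *ᵥ v = algebraMap K L μ • v) (hsum : ∑ i, v i = 1) :
    ∃ u : n → K, M *ᵥ u = μ • u ∧ ∑ i, u i = 1 := by
  -- a `K`-linear retraction `L → K` carries the eigen-equation and the normalisation down to `K`
  obtain ⟨g, hg⟩ := (Algebra.linearMap K L).exists_leftInverse_of_injective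
    (LinearMap.ker_eq_bot.2 (algebraMap K L).injective)
  have hg' (x : K) : g (algebraMap K L x) = x := LinearMap.congr_fun hg x
  refine ⟨g ∘ v, funext fun i => ?_, ?_⟩
  · have := congr_arg g (congr_fun h i)
    simpa [mulVec, dotProduct, map_sum, ← Algebra.smul_def, hg'] using this
  · have := congr_arg g hsum
    rwa [map_sum, ← map_one (algebraMap K L), hg'] at this

end Matrix

theorem RingHom.mulVec_comp_eq_smul {n R S : Type*} [Fintype n] [CommRing R] [CommRing S]
    (f : R →+* S) {M : Matrix n n R} {u : n → R} {μ : R} (h : M *ᵥ u = μ • u) :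
    M.map f *ᵥ (f ∘ u) = f μ • (f ∘ u) :=
  funext fun i => by rw [← f.map_mulVec, h]; simp

theorem exists_conj_one_le_norm_of_not_isPisot {β : ℝ} (hβ : 1 < β) (hint : IsIntegral ℤ β)
    (hnp : ¬ IsPisot β) :
    ∃ γ : ℂ, aeval γ (minpoly ℚ β) = 0 ∧ γ ≠ β ∧ 1 ≤ ‖γ‖ := by
  by_contra! h
  exact hnp ⟨hβ, hint, fun γ hγ hγβ => h γ hγ hγβ⟩

namespace IntermediateField

variable {F E : Type*} [Field F] [Field E] [Algebra F E] {β : E}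

theorem exists_algHom_gen_eq {L : Type*} [Field L] [Algebra F L] (hβ : IsIntegral F β) {γ : L}
    (hγ : aeval γ (minpoly F β) = 0) : ∃ ψ : F⟮β⟯ →ₐ[F] L, ψ (AdjoinSimple.gen F β) = γ :=
  ⟨_, algHomAdjoinIntegralEquiv_symm_apply_gen F hβ ⟨γ, mem_aroots.2 ⟨minpoly.ne_zero hβ, hγ⟩⟩⟩

theorem map_val_le_adjoin (hβ : IsAlgebraic F β) (p : Submodule F F⟮β⟯) :
    p.map F⟮β⟯.val.toLinearMap ≤ Subalgebra.toSubmodule (Algebra.adjoin F {β}) := by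
  rw [← adjoin_simple_toSubalgebra_of_isAlgebraic hβ]
  rintro _ ⟨x, -, rfl⟩
  exact x.2

theorem finrank_map_val_lt (hβ : IsIntegral F β) {p : Submodule F F⟮β⟯}
    (hp : AdjoinSimple.gen F β ∉ p) :
    Module.finrank F (p.map F⟮β⟯.val.toLinearMap) < (minpoly F β).natDegree := by
  have := adjoin.finiteDimensional hβ
  rw [← (p.equivMapOfInjective _ Subtype.val_injective).finrank_eq, ← adjoin.finrank hβ]
  exact Submodule.finrank_lt fun h => hp (h ▸ Submodule.mem_top)

theorem notMem_map_val {p : Submodule F F⟮β⟯} (hp : AdjoinSimple.gen F β ∉ p) :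
    β ∉ p.map F⟮β⟯.val.toLinearMap := by
  rintro ⟨x, hx, hxβ⟩
  obtain rfl : x = AdjoinSimple.gen F β := Subtype.ext hxβ
  exact hp hx

end IntermediateField

theorem stmt_13_general {A : Type*} [Fintype A] [DecidableEq A] (M : Matrix A A ℤ)
    (β : ℝ) (hβ1 : 1 < β)
    (hβeig : ∃ v : A → ℂ, (M.map (fun x : ℤ => (x : ℂ))).mulVec v = (β : ℂ) • v ∧ ∑ a, v a = 1)
    (hnp : ¬ IsPisot β) :
    ∃ W : Submodule ℚ ℝ,
      W ≤ Subalgebra.toSubmodule (Algebra.adjoin ℚ {β}) ∧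
      Module.finrank ℚ W < (minpoly ℚ β).natDegree ∧
      β ∉ W ∧
      ∀ α : ℝ,
        (∃ w : A → ℤ, ∀ (δ : ℂ) (v : A → ℂ), 1 ≤ ‖δ‖ →
          (M.map (fun x : ℤ => (x : ℂ))).mulVec v = δ • v → ∑ a, v a = 1 →
          ∑ a, (w a : ℂ) * v a = (α : ℂ)) → α ∈ W := by
  obtain ⟨v, hv, hvsum⟩ := hβeig
  have hint : IsIntegral ℤ β :=
    (isIntegral_algHom_iff Complex.ofRealHom.toIntAlgHom Complex.ofReal_injective).mp <|
      M.isIntegral_of_map_mulVec_eq_smul (fun h => by simp [h] at hvsum) hv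
  have hintQ : IsIntegral ℚ β := hint.tower_top
  obtain ⟨γ, hγ, hγβ, hγnorm⟩ := exists_conj_one_le_norm_of_not_isPisot hβ1 hint hnp
  obtain ⟨ψ, hψ⟩ := exists_algHom_gen_eq hintQ hγ
  set gen := AdjoinSimple.gen ℚ β
  let ι : ℚ⟮β⟯ →ₐ[ℚ] ℂ := IsScalarTower.toAlgHom ℚ _ ℂ
  have hι : ι gen = β := rfl
  have hgen : gen ∉ LinearMap.eqLocus ψ.toLinearMap ι.toLinearMap := by
    simpa [hψ, hι] using hγβ
  refine ⟨_, map_val_le_adjoin hintQ.isAlgebraic _, finrank_map_val_lt hintQ hgen,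
    notMem_map_val hgen, ?_⟩
  rintro α ⟨w, hw⟩
  obtain ⟨u, hu, husum⟩ := (M.map (Int.cast : ℤ → ℚ⟮β⟯)).exists_mulVec_eq_smul_of_map
    (μ := gen) (by rwa [map_intCast_map]) hvsum
  have hval (χ : ℚ⟮β⟯ →+* ℂ) (hχ : 1 ≤ ‖χ gen‖) : χ (∑ a, w a * u a) = α := by
    simpa using hw (χ gen) (χ ∘ u) hχ
      (by rw [← map_intCast_map χ]; exact χ.mulVec_comp_eq_smul hu) (by simp [← map_sum, husum])
  have hβnorm : 1 ≤ ‖(ι : ℚ⟮β⟯ →+* ℂ) gen‖ := by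
    simpa [hι, abs_of_pos (zero_lt_one.trans hβ1)] using hβ1.le
  exact ⟨∑ a, (w a : ℚ⟮β⟯) * u a, (hval ψ (by simpa [hψ] using hγnorm)).trans (hval ι hβnorm).symm,
    Complex.ofReal_injective (hval ι hβnorm)⟩

theorem stmt_13 {A : Type*} [Fintype A] [DecidableEq A] (M : Matrix A A ℤ)
    (hprim : ∃ n : ℕ, ∀ i j, 0 < (M ^ n) i j)
    (hpu : PseudoUnimodular M)
    (β : ℝ) (hβ1 : 1 < β)
    (hβeig : ∃ v : A → ℂ, (M.map (fun x : ℤ => (x : ℂ))).mulVec v = (β : ℂ) • v ∧ ∑ a, v a = 1)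
    (hnp : ¬ IsPisot β) :
    ∃ W : Submodule ℚ ℝ,
      W ≤ Subalgebra.toSubmodule (Algebra.adjoin ℚ {β}) ∧
      Module.finrank ℚ W < (minpoly ℚ β).natDegree ∧
      β ∉ W ∧
      ∀ α : ℝ,
        (∃ w : A → ℤ, ∀ (δ : ℂ) (v : A → ℂ), 1 ≤ ‖δ‖ →
          (M.map (fun x : ℤ => (x : ℂ))).mulVec v = δ • v → ∑ a, v a = 1 →
          ∑ a, (w a : ℂ) * v a = (α : ℂ)) → α ∈ W :=
  stmt_13_general M β hβ1 hβeig hnp
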